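/- The function u₁ := ∂_t u satisfies, for all x ∈ Ω and 0 < t < T, ∂_t²u₁(x,t) = (Au₁)(x,t) + ∫₀ᵗ Σ_{|α|≤2} b_α^{(1)}(x,t,η) ∂_x^α u₁(x,η) dη + (∂_t R)(x,t) f(x), together with the initial conditions u₁(x,0) = 0 and ∂_t u₁(x,0) = R(x,0) f(x) for all x ∈ Ω. -/

import Mathlib

open MeasureTheory

noncomputable def pd {n : ℕ} (i : Fin n) (v : (Fin n → ℝ) → ℝ) (x : Fin n → ℝ) : ℝ :=
  fderiv ℝ v x (Pi.single i 1)

noncomputable def opA {n : ℕ} (a : Fin n → Fin n → (Fin n → ℝ) → ℝ)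
    (v : (Fin n → ℝ) → ℝ) (x : Fin n → ℝ) : ℝ :=
  ∑ i, ∑ j, pd i (fun y => a i j y * pd j v y) x

noncomputable def tder {n : ℕ} (k : ℕ) (u : (Fin n → ℝ) → ℝ → ℝ)
    (x : Fin n → ℝ) (t : ℝ) : ℝ :=
  deriv^[k] (fun s => u x s) t

noncomputable def memTerm {n : ℕ}
    (b0 : (Fin n → ℝ) → ℝ → ℝ → ℝ)
    (b1 : Fin n → (Fin n → ℝ) → ℝ → ℝ → ℝ)
    (b2 : Fin n → Fin n → (Fin n → ℝ) → ℝ → ℝ → ℝ)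
    (u : (Fin n → ℝ) → ℝ → ℝ) (x : Fin n → ℝ) (t : ℝ) : ℝ :=
  ∫ η in (0:ℝ)..t,
    (b0 x t η * u x η + (∑ i, b1 i x t η * pd i (fun y => u y η) x)
      + ∑ i, ∑ j, b2 i j x t η * pd i (pd j (fun y => u y η)) x)

noncomputable def energy {n : ℕ} (Ω : Set (Fin n → ℝ))
    (a : Fin n → Fin n → (Fin n → ℝ) → ℝ)
    (v : (Fin n → ℝ) → ℝ → ℝ) (t : ℝ) : ℝ :=
  ∫ x in Ω, ((tder 1 v x t) ^ 2
    + ∑ i, ∑ j, a i j x * pd i (fun y => v y t) x * pd j (fun y => v y t) x)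

def CoeffOK {n : ℕ} (a : Fin n → Fin n → (Fin n → ℝ) → ℝ) : Prop :=
  (∀ i j x, a i j x = a j i x) ∧
  (∀ i j, ContDiff ℝ 1 (a i j)) ∧
  (∃ M : ℝ, ∀ i j x, |a i j x| ≤ M ∧ ‖fderiv ℝ (a i j) x‖ ≤ M) ∧
  (∃ μ₀ > (0:ℝ), ∀ x ξ : Fin n → ℝ,
    μ₀ * (∑ i, ξ i ^ 2) ≤ ∑ i, ∑ j, a i j x * ξ i * ξ j)

def SmoothBdd3 {n : ℕ} (b : (Fin n → ℝ) → ℝ → ℝ → ℝ) : Prop :=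
  ContDiff ℝ (⊤ : ℕ∞) (fun p : (Fin n → ℝ) × ℝ × ℝ => b p.1 p.2.1 p.2.2) ∧
  ∀ k : ℕ, ∃ M : ℝ, ∀ p : (Fin n → ℝ) × ℝ × ℝ,
    ‖iteratedFDeriv ℝ k (fun q : (Fin n → ℝ) × ℝ × ℝ => b q.1 q.2.1 q.2.2) p‖ ≤ M

def SmoothBdd2 {n : ℕ} (R : (Fin n → ℝ) → ℝ → ℝ) : Prop :=
  ContDiff ℝ (⊤ : ℕ∞) (fun p : (Fin n → ℝ) × ℝ => R p.1 p.2) ∧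
  ∀ k : ℕ, ∃ M : ℝ, ∀ p : (Fin n → ℝ) × ℝ,
    ‖iteratedFDeriv ℝ k (fun q : (Fin n → ℝ) × ℝ => R q.1 q.2) p‖ ≤ M

noncomputable def ker1 {n : ℕ} (b : (Fin n → ℝ) → ℝ → ℝ → ℝ)
    (x : Fin n → ℝ) (t η : ℝ) : ℝ :=
  b x t t + ∫ ξ in η..t, deriv (fun s => b x s ξ) t

noncomputable def L2n {n : ℕ} (Ω : Set (Fin n → ℝ)) (v : (Fin n → ℝ) → ℝ) : ℝ :=
  Real.sqrt (∫ x in Ω, (v x) ^ 2)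

noncomputable def H1n {n : ℕ} (Ω : Set (Fin n → ℝ)) (v : (Fin n → ℝ) → ℝ) : ℝ :=
  Real.sqrt (∫ x in Ω, ((v x) ^ 2 + ∑ i, (pd i v x) ^ 2))

noncomputable def H2n {n : ℕ} (Ω : Set (Fin n → ℝ)) (v : (Fin n → ℝ) → ℝ) : ℝ :=
  Real.sqrt (∫ x in Ω, ((v x) ^ 2 + (∑ i, (pd i v x) ^ 2)
    + ∑ i, ∑ j, (pd i (pd j v) x) ^ 2))


/-! ### Auxiliary lemmas -/

section Slice
variable {E : Type*} [NormedAddCommGroup E] [NormedSpace ℝ E]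

lemma hasFDerivAt_incl (t : ℝ) (x : E) :
    HasFDerivAt (fun y : E => (y, t)) (ContinuousLinearMap.inl ℝ E ℝ) x := by
  have h : (ContinuousLinearMap.inl ℝ E ℝ)
      = (ContinuousLinearMap.id ℝ E).prod (0 : E →L[ℝ] ℝ) :=
    ContinuousLinearMap.ext fun y => by simp
  rw [h]
  exact (hasFDerivAt_id x).prodMk (hasFDerivAt_const t x)

lemma hasFDerivAt_incr (x : E) (t : ℝ) :
    HasFDerivAt (fun s : ℝ => (x, s)) (ContinuousLinearMap.inr ℝ E ℝ) t := by
  have h : (ContinuousLinearMap.inr ℝ E ℝ)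
      = (0 : ℝ →L[ℝ] E).prod (ContinuousLinearMap.id ℝ ℝ) :=
    ContinuousLinearMap.ext fun y => by simp
  rw [h]
  exact (hasFDerivAt_const x t).prodMk (hasFDerivAt_id t)

variable {V : E × ℝ → ℝ} (hV : ContDiff ℝ (⊤ : ℕ∞) V)

include hV

lemma Vdiff : Differentiable ℝ V := hV.differentiable (by simp)

lemma sliceX (t : ℝ) (x : E) :
    HasFDerivAt (fun y : E => V (y, t))
      ((fderiv ℝ V (x, t)).comp (ContinuousLinearMap.inl ℝ E ℝ)) x :=
  ((Vdiff hV (x, t)).hasFDerivAt).comp x (hasFDerivAt_incl t x)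

lemma sliceT (x : E) (t : ℝ) :
    HasDerivAt (fun s : ℝ => V (x, s)) (fderiv ℝ V (x, t) (0, 1)) t := by
  have h := ((Vdiff hV (x, t)).hasFDerivAt).comp t (hasFDerivAt_incr x t)
  have := h.hasDerivAt
  simpa [Function.comp_def] using this

lemma fderiv_fderiv_hasFDerivAt (p : E × ℝ) :
    HasFDerivAt (fderiv ℝ V) (fderiv ℝ (fderiv ℝ V) p) p := by
  have h1 : ContDiff ℝ (⊤ : ℕ∞) (fderiv ℝ V) := by
    apply hV.fderiv_right
    exact_mod_cast le_top
  exact (h1.differentiable (by simp) p).hasFDerivAt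

lemma contDiff_fderiv_apply (k : E × ℝ) :
    ContDiff ℝ (⊤ : ℕ∞) (fun p : E × ℝ => fderiv ℝ V p k) := by
  have h1 : ContDiff ℝ (⊤ : ℕ∞) (fderiv ℝ V) := by
    apply hV.fderiv_right
    exact_mod_cast le_top
  exact h1.clm_apply contDiff_const

lemma derivT_fderiv (x : E) (t : ℝ) (k : E × ℝ) :
    HasDerivAt (fun s : ℝ => fderiv ℝ V (x, s) k)
      (fderiv ℝ (fderiv ℝ V) (x, t) (0, 1) k) t := by
  have h1 := (fderiv_fderiv_hasFDerivAt hV (x, t)).comp t (hasFDerivAt_incr x t)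
  have h2 := ((ContinuousLinearMap.apply ℝ ℝ k).hasFDerivAt).comp t h1
  have := h2.hasDerivAt
  simpa [Function.comp_def] using this

lemma symm2 (p : E × ℝ) (h k : E × ℝ) :
    fderiv ℝ (fderiv ℝ V) p h k = fderiv ℝ (fderiv ℝ V) p k h :=
  second_derivative_symmetric (fun y => (Vdiff hV y).hasFDerivAt)
    (fderiv_fderiv_hasFDerivAt hV p) h k

end Slice

lemma pd_fderiv {n : ℕ} {V : (Fin n → ℝ) × ℝ → ℝ} (hV : ContDiff ℝ (⊤ : ℕ∞) V)
    (i : Fin n) (t : ℝ) (x : Fin n → ℝ) :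
    pd i (fun y => V (y, t)) x = fderiv ℝ V (x, t) (Pi.single i 1, 0) := by
  have := (sliceX hV t x).fderiv
  simp only [pd, this]
  rfl

lemma pd_fderiv_mixed {n : ℕ} {V : (Fin n → ℝ) × ℝ → ℝ} (hV : ContDiff ℝ (⊤ : ℕ∞) V)
    (i : Fin n) (t : ℝ) (x : Fin n → ℝ) (k : (Fin n → ℝ) × ℝ) :
    pd i (fun y => fderiv ℝ V (y, t) k) x
      = fderiv ℝ (fderiv ℝ V) (x, t) (Pi.single i 1, 0) k := by
  have h1 := (fderiv_fderiv_hasFDerivAt hV ((x, t) : (Fin n → ℝ) × ℝ)).comp x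
    (hasFDerivAt_incl t x)
  have h2 := ((ContinuousLinearMap.apply ℝ ℝ k).hasFDerivAt).comp x h1
  have h2' : HasFDerivAt (fun y => fderiv ℝ V (y, t) k)
      (((ContinuousLinearMap.apply ℝ ℝ k).comp
        ((fderiv ℝ (fderiv ℝ V) (x, t)).comp
          (ContinuousLinearMap.inl ℝ (Fin n → ℝ) ℝ)))) x := h2
  simp only [pd, h2'.fderiv]
  rfl

/-- The time-slice swap: d/dt (pd i V(·,t))(x) = pd i (∂ₜV(·,t))(x). -/
lemma swap_hasDerivAt {n : ℕ} {V : (Fin n → ℝ) × ℝ → ℝ} (hV : ContDiff ℝ (⊤ : ℕ∞) V)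
    (i : Fin n) (x : Fin n → ℝ) (t : ℝ) :
    HasDerivAt (fun s => pd i (fun y => V (y, s)) x)
      (pd i (fun y => deriv (fun s => V (y, s)) t) x) t := by
  have e1 : (fun s => pd i (fun y => V (y, s)) x)
      = fun s => fderiv ℝ V (x, s) (Pi.single i 1, 0) := by
    funext s; exact pd_fderiv hV i s x
  have e2 : (fun y => deriv (fun s => V (y, s)) t)
      = fun y => fderiv ℝ V (y, t) ((0 : Fin n → ℝ), (1:ℝ)) := by
    funext y; exact (sliceT hV y t).deriv
  rw [e1, e2]
  have h := derivT_fderiv hV x t ((Pi.single i 1 : Fin n → ℝ), (0:ℝ))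
  rw [pd_fderiv_mixed hV i t x ((0 : Fin n → ℝ), (1:ℝ))]
  rw [symm2 hV]
  exact h

lemma pd_mul {n : ℕ} (i : Fin n) {a g : (Fin n → ℝ) → ℝ} {x : Fin n → ℝ}
    (ha : DifferentiableAt ℝ a x) (hg : DifferentiableAt ℝ g x) :
    pd i (fun y => a y * g y) x = pd i a x * g x + a x * pd i g x := by
  simp only [pd, fderiv_fun_mul ha hg]
  simp only [ContinuousLinearMap.add_apply, ContinuousLinearMap.smul_apply, smul_eq_mul]
  ring

lemma slice_smooth {n : ℕ} {V : (Fin n → ℝ) × ℝ → ℝ} (hV : ContDiff ℝ (⊤ : ℕ∞) V)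
    (t : ℝ) : ContDiff ℝ (⊤ : ℕ∞) (fun y : Fin n → ℝ => V (y, t)) :=
  hV.comp (contDiff_id.prodMk contDiff_const)

lemma swap_pd_eq {n : ℕ} {V : (Fin n → ℝ) × ℝ → ℝ} (hV : ContDiff ℝ (⊤ : ℕ∞) V)
    (j : Fin n) (y : Fin n → ℝ) (t : ℝ) :
    pd j (fun z => deriv (fun s => V (z, s)) t) y
      = deriv (fun s => pd j (fun z => V (z, s)) y) t :=
  (swap_hasDerivAt hV j y t).deriv.symm

/-! opA differentiation in time -/

lemma opA_hasDerivAt {n : ℕ} (aij : Fin n → Fin n → (Fin n → ℝ) → ℝ)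
    (haij : ∀ i j, ContDiff ℝ 1 (aij i j))
    {V : (Fin n → ℝ) × ℝ → ℝ} (hV : ContDiff ℝ (⊤ : ℕ∞) V) (x : Fin n → ℝ) (t : ℝ) :
    HasDerivAt (fun s => opA aij (fun y => V (y, s)) x)
      (opA aij (fun y => deriv (fun s => V (y, s)) t) x) t := by
  classical
  set V1 : (Fin n → ℝ) × ℝ → ℝ := fun p => deriv (fun s => V (p.1, s)) p.2 with hV1def
  have hV1 : ContDiff ℝ (⊤ : ℕ∞) V1 := by
    have e : V1 = fun p => fderiv ℝ V p ((0 : Fin n → ℝ), (1:ℝ)) :=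
      funext fun p => (sliceT hV p.1 p.2).deriv
    rw [e]; exact contDiff_fderiv_apply hV _
  set w : Fin n → ((Fin n → ℝ) × ℝ) → ℝ :=
    fun j p => fderiv ℝ V p ((Pi.single j 1 : Fin n → ℝ), (0:ℝ)) with hwdef
  have hw : ∀ j, ContDiff ℝ (⊤ : ℕ∞) (w j) := fun j => contDiff_fderiv_apply hV _
  have hV1slice : ∀ s : ℝ, (fun y => deriv (fun s' => V (y, s')) s) = fun y => V1 (y, s) :=
    fun s => rfl
  unfold opA
  apply HasDerivAt.fun_sum
  intro i _
  apply HasDerivAt.fun_sum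
  intro j _
  have hadiff : ∀ y, DifferentiableAt ℝ (aij i j) y := fun y =>
    ((haij i j).differentiable one_ne_zero) y
  have hwslice : ∀ s : ℝ, ∀ y, pd j (fun z => V (z, s)) y = w j (y, s) :=
    fun s y => pd_fderiv hV j s y
  have efun : (fun s => pd i (fun y => aij i j y * pd j (fun z => V (z, s)) y) x)
      = fun s => pd i (aij i j) x * w j (x, s)
          + aij i j x * pd i (fun y => w j (y, s)) x := by
    funext s
    have e1 : (fun y => aij i j y * pd j (fun z => V (z, s)) y)
        = fun y => aij i j y * w j (y, s) := funext fun y => by rw [hwslice s y]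
    have hgd : DifferentiableAt ℝ (fun y => w j (y, s)) x :=
      ((slice_smooth (hw j) s).differentiable (by simp)) x
    rw [e1, pd_mul i (hadiff x) hgd]
  rw [efun]
  have h1 : HasDerivAt (fun s => w j (x, s))
      (fderiv ℝ (fderiv ℝ V) (x, t) (0, 1) ((Pi.single j 1 : Fin n → ℝ), (0:ℝ))) t :=
    derivT_fderiv hV x t _
  have h2 : HasDerivAt (fun s => pd i (fun y => w j (y, s)) x)
      (pd i (fun y => deriv (fun s => w j (y, s)) t) x) t :=
    swap_hasDerivAt (hw j) i x t
  have htot := ((h1.const_mul (pd i (aij i j) x)).add (h2.const_mul (aij i j x)))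
  have target_eq : pd i (fun y => aij i j y * pd j (fun z => V1 (z, t)) y) x
      = pd i (aij i j) x * (fderiv ℝ (fderiv ℝ V) (x, t) (0, 1)
          ((Pi.single j 1 : Fin n → ℝ), (0:ℝ)))
        + aij i j x * pd i (fun y => deriv (fun s => w j (y, s)) t) x := by
    have hpdV1 : ∀ y, pd j (fun z => V1 (z, t)) y
        = fderiv ℝ (fderiv ℝ V) (y, t) (0, 1) ((Pi.single j 1 : Fin n → ℝ), (0:ℝ)) := by
      intro y
      have e2 : (fun z => V1 (z, t)) = fun z => fderiv ℝ V (z, t) ((0:Fin n → ℝ), (1:ℝ)) :=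
        funext fun z => (sliceT hV z t).deriv
      rw [e2, pd_fderiv_mixed hV j t y ((0:Fin n → ℝ), (1:ℝ)), symm2 hV]
    have hder_w : ∀ y, deriv (fun s => w j (y, s)) t
        = fderiv ℝ (fderiv ℝ V) (y, t) (0, 1) ((Pi.single j 1 : Fin n → ℝ), (0:ℝ)) :=
      fun y => (derivT_fderiv hV y t _).deriv
    have e3 : (fun y => pd j (fun z => V1 (z, t)) y)
        = fun y => deriv (fun s => w j (y, s)) t := by
      funext y; rw [hpdV1 y, hder_w y]
    have hdiff2 : DifferentiableAt ℝ (fun y => pd j (fun z => V1 (z, t)) y) x := by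
      rw [e3]
      have e4 : (fun y => deriv (fun s => w j (y, s)) t)
          = fun y => fderiv ℝ (fderiv ℝ V) (y, t) (0, 1)
              ((Pi.single j 1 : Fin n → ℝ), (0:ℝ)) := funext fun y => hder_w y
      rw [e4]
      have hD1 : ContDiff ℝ (⊤ : ℕ∞) (fderiv ℝ V) := by
        apply hV.fderiv_right; exact_mod_cast le_top
      have hD2 : ContDiff ℝ (⊤ : ℕ∞) (fderiv ℝ (fderiv ℝ V)) := by
        apply hD1.fderiv_right; exact_mod_cast le_top
      have h5 : ContDiff ℝ (⊤ : ℕ∞) (fun p : (Fin n → ℝ) × ℝ =>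
          fderiv ℝ (fderiv ℝ V) p (0, 1) ((Pi.single j 1 : Fin n → ℝ), (0:ℝ))) :=
        (hD2.clm_apply contDiff_const).clm_apply contDiff_const
      exact ((slice_smooth h5 t).differentiable (by simp)) x
    rw [pd_mul i (hadiff x) hdiff2, hpdV1 x, e3]
  rw [hV1slice t, target_eq]
  exact htot

/-! parametric integral differentiation -/

lemma paramDeriv (F F' : ℝ → ℝ → ℝ)
    (hF : ContDiff ℝ (⊤ : ℕ∞) (fun p : ℝ × ℝ => F p.1 p.2))
    (hF' : ∀ t η, HasDerivAt (fun s => F s η) (F' t η) t)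
    (hF'c : Continuous (fun p : ℝ × ℝ => F' p.1 p.2)) (t₀ : ℝ) :
    HasDerivAt (fun t => ∫ η in (0:ℝ)..t, F t η)
      (F t₀ t₀ + ∫ η in (0:ℝ)..t₀, F' t₀ η) t₀ := by
  have hFc : Continuous (fun p : ℝ × ℝ => F p.1 p.2) := hF.continuous
  have hcont : ∀ t, Continuous (F t) := fun t =>
    hFc.comp (continuous_const.prodMk continuous_id)
  have hint : ∀ t a b, IntervalIntegrable (F t) volume a b := fun t a b =>
    (hcont t).intervalIntegrable a b
  obtain ⟨M, hM⟩ : ∃ M, ∀ p ∈ (Set.Icc (t₀ - 1) (t₀ + 1)) ×ˢ (Set.uIcc (0:ℝ) t₀),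
      ‖F' p.1 p.2‖ ≤ M := by
    exact (IsCompact.exists_bound_of_continuousOn
      ((isCompact_Icc).prod isCompact_uIcc) hF'c.continuousOn)
  have part1 : HasDerivAt (fun t => ∫ η in (0:ℝ)..t₀, F t η)
      (∫ η in (0:ℝ)..t₀, F' t₀ η) t₀ := by
    have key := intervalIntegral.hasDerivAt_integral_of_dominated_loc_of_deriv_le
      (F := F) (F' := F') (x₀ := t₀) (a := 0) (b := t₀) (μ := volume)
      (bound := fun _ => M) (s := Metric.ball t₀ 1) (Metric.ball_mem_nhds t₀ one_pos)
      (Filter.Eventually.of_forall fun t => ((hcont t).aestronglyMeasurable))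
      (hint t₀ 0 t₀)
      ((hF'c.comp (continuous_const.prodMk continuous_id)).aestronglyMeasurable)
      ?_ (intervalIntegrable_const) ?_
    · exact key.2
    · refine Filter.Eventually.of_forall fun η hη s hs => hM (s, η) ⟨?_, ?_⟩
      · have := Metric.mem_ball.mp hs
        rw [Real.dist_eq] at this
        constructor <;> [linarith [abs_le.mp this.le]; linarith [(abs_le.mp this.le).2]]
      · exact Set.uIoc_subset_uIcc hη
    · exact Filter.Eventually.of_forall fun η _ s _ => hF' s η
  have part2 : HasDerivAt (fun t => ∫ η in t₀..t, F t η) (F t₀ t₀) t₀ := by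
    rw [hasDerivAt_iff_isLittleO]
    rw [Asymptotics.isLittleO_iff]
    intro c hc
    have hc2 : (0:ℝ) < c := hc
    obtain ⟨δ, hδ, hball⟩ := Metric.continuousAt_iff.mp (hFc.continuousAt
      (x := ((t₀ : ℝ), t₀))) c hc2
    rw [Metric.eventually_nhds_iff]
    refine ⟨δ, hδ, fun t ht => ?_⟩
    have hsimp : ∫ η in t₀..t₀, F t₀ η = 0 := intervalIntegral.integral_same
    rw [hsimp]
    have he : (∫ η in t₀..t, F t η) - 0 - (t - t₀) • F t₀ t₀
        = ∫ η in t₀..t, (F t η - F t₀ t₀) := by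
      rw [intervalIntegral.integral_sub (hint t t₀ t) intervalIntegrable_const]
      simp [intervalIntegral.integral_const]
    rw [he]
    have hb : ∀ η ∈ Set.uIoc t₀ t, ‖F t η - F t₀ t₀‖ ≤ c := by
      intro η hη
      have hηd : dist η t₀ ≤ dist t t₀ := by
        rw [Real.dist_eq, Real.dist_eq]
        rcases Set.mem_uIoc.mp hη with h | h
        · rw [abs_of_pos (by linarith [h.1, h.2]), abs_of_pos (by linarith [h.1, h.2])]
          linarith [h.2]
        · rw [abs_of_nonpos (by linarith [h.1, h.2]), abs_of_neg (by linarith [h.1, h.2])]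
          linarith [h.1]
      have : dist ((t, η)) ((t₀, t₀)) < δ := by
        rw [Prod.dist_eq]
        exact max_lt (by simpa using ht) (lt_of_le_of_lt hηd (by simpa using ht))
      exact (hball this).le
    calc ‖∫ η in t₀..t, (F t η - F t₀ t₀)‖
        ≤ c * |t - t₀| := intervalIntegral.norm_integral_le_of_norm_le_const hb
      _ = c * ‖t - t₀‖ := by rw [Real.norm_eq_abs]
  have heq : (fun t => ∫ η in (0:ℝ)..t, F t η)
      = fun t => (∫ η in (0:ℝ)..t₀, F t η) + ∫ η in t₀..t, F t η := by
    funext t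
    rw [intervalIntegral.integral_add_adjacent_intervals (hint t 0 t₀) (hint t t₀ t)]
  rw [heq, add_comm (F t₀ t₀)]
  exact part1.add part2

/-! ker1 and integration by parts -/

section IBP
variable {n : ℕ} {b : (Fin n → ℝ) → ℝ → ℝ → ℝ}
  (hb : ContDiff ℝ (⊤ : ℕ∞) (fun p : (Fin n → ℝ) × ℝ × ℝ => b p.1 p.2.1 p.2.2))
  (x : Fin n → ℝ)

include hb

lemma bB_smooth : ContDiff ℝ (⊤ : ℕ∞) (fun q : ℝ × ℝ => b x q.1 q.2) :=
  hb.comp (contDiff_const.prodMk contDiff_id)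

lemma b_slice_hasDerivAt (t η : ℝ) :
    HasDerivAt (fun s => b x s η)
      (fderiv ℝ (fun q : ℝ × ℝ => b x q.1 q.2) (t, η) (1, 0)) t := by
  have hB := bB_smooth hb x
  have h := ((hB.differentiable (by simp) ((t, η))).hasFDerivAt).comp t
    ((hasFDerivAt_id (𝕜 := ℝ) t).prodMk (hasFDerivAt_const η t))
  have := h.hasDerivAt
  simpa [Function.comp_def] using this

lemma db_eq (t η : ℝ) :
    deriv (fun s => b x s η) t = fderiv ℝ (fun q : ℝ × ℝ => b x q.1 q.2) (t, η) (1, 0) :=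
  (b_slice_hasDerivAt hb x t η).deriv

lemma db_cont (t : ℝ) : Continuous (fun η => deriv (fun s => b x s η) t) := by
  have hB := bB_smooth hb x
  have h1 : ContDiff ℝ (⊤ : ℕ∞) (fderiv ℝ (fun q : ℝ × ℝ => b x q.1 q.2)) := by
    apply hB.fderiv_right; exact_mod_cast le_top
  have h2 : Continuous (fun η : ℝ =>
      fderiv ℝ (fun q : ℝ × ℝ => b x q.1 q.2) (t, η) ((1:ℝ), (0:ℝ))) := by
    exact ((h1.clm_apply contDiff_const).comp
      (contDiff_const.prodMk contDiff_id)).continuous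
  have : (fun η => deriv (fun s => b x s η) t) = fun η =>
      fderiv ℝ (fun q : ℝ × ℝ => b x q.1 q.2) (t, η) ((1:ℝ), (0:ℝ)) := by
    funext η; exact db_eq hb x t η
  rw [this]; exact h2

lemma db_cont2 : Continuous (fun q : ℝ × ℝ => deriv (fun s => b x s q.2) q.1) := by
  have hB := bB_smooth hb x
  have h1 : ContDiff ℝ (⊤ : ℕ∞) (fderiv ℝ (fun q : ℝ × ℝ => b x q.1 q.2)) := by
    apply hB.fderiv_right; exact_mod_cast le_top
  have e : (fun q : ℝ × ℝ => deriv (fun s => b x s q.2) q.1)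
      = fun q => fderiv ℝ (fun q : ℝ × ℝ => b x q.1 q.2) (q.1, q.2) ((1:ℝ), (0:ℝ)) := by
    funext q; exact db_eq hb x q.1 q.2
  rw [e]
  exact (h1.clm_apply contDiff_const).continuous

lemma ker1_hasDerivAt (t η : ℝ) :
    HasDerivAt (fun η' => ker1 b x t η') (-(deriv (fun s => b x s η) t)) η := by
  have hc := db_cont hb x t
  have h1 : ∀ η', ker1 b x t η' = b x t t - ∫ ξ in t..η', deriv (fun s => b x s ξ) t := by
    intro η'
    rw [ker1, intervalIntegral.integral_symm]
    ring
  have h2 : HasDerivAt (fun η' => ∫ ξ in t..η', deriv (fun s => b x s ξ) t)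
      (deriv (fun s => b x s η) t) η :=
    intervalIntegral.integral_hasDerivAt_right (hc.intervalIntegrable t η)
      (hc.stronglyMeasurableAtFilter _ _) hc.continuousAt
  have h3 := (hasDerivAt_const η (b x t t)).sub h2
  simp only [zero_sub] at h3
  have : (fun η' => ker1 b x t η') = fun η' =>
      b x t t - ∫ ξ in t..η', deriv (fun s => b x s ξ) t := funext h1
  rw [this]
  exact h3

lemma ker1_cont (t : ℝ) : Continuous (fun η => ker1 b x t η) :=
  continuous_iff_continuousAt.mpr fun η => (ker1_hasDerivAt hb x t η).continuousAt

omit hb in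
lemma ker1_self (t : ℝ) : ker1 b x t t = b x t t := by
  simp [ker1]

/-- Main integration by parts identity. -/
lemma ibp (t : ℝ) (g g' : ℝ → ℝ) (hg : ∀ η, HasDerivAt g (g' η) η)
    (hg' : Continuous g') (hg0 : g 0 = 0) :
    ∫ η in (0:ℝ)..t, ker1 b x t η * g' η
      = b x t t * g t + ∫ η in (0:ℝ)..t, deriv (fun s => b x s η) t * g η := by
  have hgc : Continuous g :=
    continuous_iff_continuousAt.mpr fun η => (hg η).continuousAt
  have hdb := db_cont hb x t
  have hibp := intervalIntegral.integral_mul_deriv_eq_deriv_mul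
    (u := fun η => ker1 b x t η) (u' := fun η => -(deriv (fun s => b x s η) t))
    (v := g) (v' := g') (a := 0) (b := t)
    (fun η _ => ker1_hasDerivAt hb x t η) (fun η _ => hg η)
    ((hdb.neg).intervalIntegrable 0 t) (hg'.intervalIntegrable 0 t)
  rw [hibp]
  rw [ker1_self, hg0]
  have : ∫ η in (0:ℝ)..t, -deriv (fun s => b x s η) t * g η
      = -∫ η in (0:ℝ)..t, deriv (fun s => b x s η) t * g η := by
    rw [← intervalIntegral.integral_neg]
    congr 1; funext η; ring
  rw [this]
  ring

end IBP

/-! u-specific lemmas -/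

section UU
variable {n : ℕ} {u : (Fin n → ℝ) → ℝ → ℝ}
  (hu : ContDiff ℝ (⊤ : ℕ∞) (fun p : (Fin n → ℝ) × ℝ => u p.1 p.2))

include hu

lemma u1_joint_smooth :
    ContDiff ℝ (⊤ : ℕ∞) (fun p : (Fin n → ℝ) × ℝ => deriv (fun s => u p.1 s) p.2) := by
  have e : (fun p : (Fin n → ℝ) × ℝ => deriv (fun s => u p.1 s) p.2)
      = fun p => fderiv ℝ (fun p : (Fin n → ℝ) × ℝ => u p.1 p.2) p
          ((0 : Fin n → ℝ), (1:ℝ)) :=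
    funext fun p => (sliceT hu p.1 p.2).deriv
  rw [e]; exact contDiff_fderiv_apply hu _

lemma g0_smooth (x : Fin n → ℝ) : ContDiff ℝ (⊤ : ℕ∞) (fun η => u x η) :=
  hu.comp (contDiff_const.prodMk contDiff_id)

lemma g1_eq (i : Fin n) (x : Fin n → ℝ) :
    (fun η => pd i (fun y => u y η) x)
      = fun η => fderiv ℝ (fun p : (Fin n → ℝ) × ℝ => u p.1 p.2) (x, η)
          ((Pi.single i 1 : Fin n → ℝ), (0:ℝ)) :=
  funext fun η => pd_fderiv hu i η x

lemma g1_smooth (i : Fin n) (x : Fin n → ℝ) :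
    ContDiff ℝ (⊤ : ℕ∞) (fun η => pd i (fun y => u y η) x) := by
  rw [g1_eq hu i x]
  exact (contDiff_fderiv_apply hu _).comp (contDiff_const.prodMk contDiff_id)

lemma g2_eq (i j : Fin n) (x : Fin n → ℝ) :
    (fun η => pd i (pd j (fun y => u y η)) x)
      = fun η => fderiv ℝ (fun p : (Fin n → ℝ) × ℝ =>
          fderiv ℝ (fun q : (Fin n → ℝ) × ℝ => u q.1 q.2) p
            ((Pi.single j 1 : Fin n → ℝ), (0:ℝ))) (x, η)
          ((Pi.single i 1 : Fin n → ℝ), (0:ℝ)) := by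
  funext η
  have e : pd j (fun y => u y η)
      = fun y => fderiv ℝ (fun q : (Fin n → ℝ) × ℝ => u q.1 q.2) (y, η)
          ((Pi.single j 1 : Fin n → ℝ), (0:ℝ)) :=
    funext fun y => pd_fderiv hu j η y
  rw [e]
  exact pd_fderiv (contDiff_fderiv_apply hu _) i η x

lemma g2_smooth (i j : Fin n) (x : Fin n → ℝ) :
    ContDiff ℝ (⊤ : ℕ∞) (fun η => pd i (pd j (fun y => u y η)) x) := by
  rw [g2_eq hu i j x]
  exact (contDiff_fderiv_apply (contDiff_fderiv_apply hu _) _).comp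
    (contDiff_const.prodMk contDiff_id)

lemma g0_hasDeriv (x : Fin n → ℝ) (η : ℝ) :
    HasDerivAt (fun η' => u x η') (tder 1 u x η) η := by
  have h := ((g0_smooth hu x).differentiable (by simp) η).hasDerivAt
  exact h

lemma g1_hasDeriv (i : Fin n) (x : Fin n → ℝ) (η : ℝ) :
    HasDerivAt (fun η' => pd i (fun y => u y η') x)
      (pd i (fun y => tder 1 u y η) x) η := by
  have h := swap_hasDerivAt hu i x η
  exact h

lemma g2_hasDeriv (i j : Fin n) (x : Fin n → ℝ) (η : ℝ) :
    HasDerivAt (fun η' => pd i (pd j (fun y => u y η')) x)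
      (pd i (pd j (fun y => tder 1 u y η)) x) η := by
  set V : (Fin n → ℝ) × ℝ → ℝ := fun p => u p.1 p.2 with hVdef
  set w : (Fin n → ℝ) × ℝ → ℝ :=
    fun p => fderiv ℝ V p ((Pi.single j 1 : Fin n → ℝ), (0:ℝ)) with hwdef
  have hw : ContDiff ℝ (⊤ : ℕ∞) w := contDiff_fderiv_apply hu _
  have e1 : ∀ s : ℝ, pd j (fun y => u y s) = fun y => w (y, s) :=
    fun s => funext fun y => pd_fderiv hu j s y
  have h := swap_hasDerivAt hw i x η
  have e2 : (fun s => pd i (fun y => w (y, s)) x)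
      = fun s => pd i (pd j (fun y => u y s)) x := by
    funext s; rw [e1 s]
  rw [e2] at h
  have e3 : pd i (fun y => deriv (fun s => w (y, s)) η) x
      = pd i (pd j (fun y => tder 1 u y η)) x := by
    have e4 : (fun y => deriv (fun s => w (y, s)) η)
        = pd j (fun z => tder 1 u z η) := by
      funext y
      have e5 : (fun s => w (y, s)) = fun s => pd j (fun z => u z s) y :=
        funext fun s => (pd_fderiv hu j s y).symm
      rw [e5]
      have h6 := (swap_hasDerivAt hu j y η).deriv
      exact h6
    rw [e4]
  rw [e3] at h
  exact h

lemma g0'_cont (x : Fin n → ℝ) : Continuous (fun η => tder 1 u x η) :=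
  ((g0_smooth hu x).iterate_deriv 1).continuous

lemma g1'_cont (i : Fin n) (x : Fin n → ℝ) :
    Continuous (fun η => pd i (fun y => tder 1 u y η) x) := by
  have hU1 := u1_joint_smooth hu
  have h : ContDiff ℝ (⊤ : ℕ∞)
      (fun η => pd i (fun y => tder 1 u y η) x) := g1_smooth (u := tder 1 u) hU1 i x
  exact h.continuous

lemma g2'_cont (i j : Fin n) (x : Fin n → ℝ) :
    Continuous (fun η => pd i (pd j (fun y => tder 1 u y η)) x) := by
  have hU1 := u1_joint_smooth hu
  have h : ContDiff ℝ (⊤ : ℕ∞)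
      (fun η => pd i (pd j (fun y => tder 1 u y η)) x) :=
    g2_smooth (u := tder 1 u) hU1 i j x
  exact h.continuous

end UU

lemma pd_const0 {n : ℕ} (j : Fin n) : pd j (fun _ : Fin n → ℝ => (0:ℝ)) = fun _ => 0 := by
  funext y
  simp [pd]

lemma pd_pd_zero {n : ℕ} {v : (Fin n → ℝ) → ℝ} (hv : v = fun _ => 0) (i j : Fin n)
    (x : Fin n → ℝ) : pd i (pd j v) x = 0 := by
  rw [hv, pd_const0 j]
  simp [pd]

/-! memory term differentiation and kernel transformation -/

noncomputable def bdry {n : ℕ}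
    (b0 : (Fin n → ℝ) → ℝ → ℝ → ℝ)
    (b1 : Fin n → (Fin n → ℝ) → ℝ → ℝ → ℝ)
    (b2 : Fin n → Fin n → (Fin n → ℝ) → ℝ → ℝ → ℝ)
    (u : (Fin n → ℝ) → ℝ → ℝ) (x : Fin n → ℝ) (t : ℝ) : ℝ :=
  b0 x t t * u x t + (∑ i, b1 i x t t * pd i (fun y => u y t) x)
    + ∑ i, ∑ j, b2 i j x t t * pd i (pd j (fun y => u y t)) x

noncomputable def memTail {n : ℕ}
    (b0 : (Fin n → ℝ) → ℝ → ℝ → ℝ)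
    (b1 : Fin n → (Fin n → ℝ) → ℝ → ℝ → ℝ)
    (b2 : Fin n → Fin n → (Fin n → ℝ) → ℝ → ℝ → ℝ)
    (u : (Fin n → ℝ) → ℝ → ℝ) (x : Fin n → ℝ) (t : ℝ) : ℝ :=
  ∫ η in (0:ℝ)..t,
    (deriv (fun s => b0 x s η) t * u x η
      + (∑ i, deriv (fun s => b1 i x s η) t * pd i (fun y => u y η) x)
      + ∑ i, ∑ j, deriv (fun s => b2 i j x s η) t * pd i (pd j (fun y => u y η)) x)

section Mem
variable {n : ℕ}
    {b0 : (Fin n → ℝ) → ℝ → ℝ → ℝ}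
    {b1 : Fin n → (Fin n → ℝ) → ℝ → ℝ → ℝ}
    {b2 : Fin n → Fin n → (Fin n → ℝ) → ℝ → ℝ → ℝ}
    (hb0 : ContDiff ℝ (⊤ : ℕ∞) (fun p : (Fin n → ℝ) × ℝ × ℝ => b0 p.1 p.2.1 p.2.2))
    (hb1 : ∀ i, ContDiff ℝ (⊤ : ℕ∞) (fun p : (Fin n → ℝ) × ℝ × ℝ => b1 i p.1 p.2.1 p.2.2))
    (hb2 : ∀ i j, ContDiff ℝ (⊤ : ℕ∞) (fun p : (Fin n → ℝ) × ℝ × ℝ => b2 i j p.1 p.2.1 p.2.2))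
    {u : (Fin n → ℝ) → ℝ → ℝ}
    (hu : ContDiff ℝ (⊤ : ℕ∞) (fun p : (Fin n → ℝ) × ℝ => u p.1 p.2))
    (x : Fin n → ℝ)

include hb0 hb1 hb2 hu

lemma memTerm_hasDerivAt (t : ℝ) :
    HasDerivAt (fun s => memTerm b0 b1 b2 u x s)
      (bdry b0 b1 b2 u x t + memTail b0 b1 b2 u x t) t := by
  classical
  set F : ℝ → ℝ → ℝ := fun s η =>
    b0 x s η * u x η + (∑ i, b1 i x s η * pd i (fun y => u y η) x)
      + ∑ i, ∑ j, b2 i j x s η * pd i (pd j (fun y => u y η)) x with hFdef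
  set F' : ℝ → ℝ → ℝ := fun s η =>
    deriv (fun s' => b0 x s' η) s * u x η
      + (∑ i, deriv (fun s' => b1 i x s' η) s * pd i (fun y => u y η) x)
      + ∑ i, ∑ j, deriv (fun s' => b2 i j x s' η) s * pd i (pd j (fun y => u y η)) x
    with hF'def
  have hFsm : ContDiff ℝ (⊤ : ℕ∞) (fun p : ℝ × ℝ => F p.1 p.2) := by
    refine ContDiff.add (ContDiff.add ?_ ?_) ?_
    · exact (bB_smooth hb0 x).mul ((g0_smooth hu x).comp contDiff_snd)
    · exact ContDiff.sum fun i _ =>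
        (bB_smooth (hb1 i) x).mul ((g1_smooth hu i x).comp contDiff_snd)
    · exact ContDiff.sum fun i _ => ContDiff.sum fun j _ =>
        (bB_smooth (hb2 i j) x).mul ((g2_smooth hu i j x).comp contDiff_snd)
  have hF'd : ∀ t η, HasDerivAt (fun s => F s η) (F' t η) t := by
    intro t η
    refine HasDerivAt.add (HasDerivAt.add ?_ ?_) ?_
    · exact ((b_slice_hasDerivAt hb0 x t η).differentiableAt.hasDerivAt).mul_const _
    · exact HasDerivAt.fun_sum fun i _ =>
        ((b_slice_hasDerivAt (hb1 i) x t η).differentiableAt.hasDerivAt).mul_const _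
    · exact HasDerivAt.fun_sum fun i _ => HasDerivAt.fun_sum fun j _ =>
        ((b_slice_hasDerivAt (hb2 i j) x t η).differentiableAt.hasDerivAt).mul_const _
  have hF'c : Continuous (fun p : ℝ × ℝ => F' p.1 p.2) := by
    refine Continuous.add (Continuous.add ?_ ?_) ?_
    · exact (db_cont2 hb0 x).mul ((g0_smooth hu x).continuous.comp continuous_snd)
    · exact continuous_finset_sum _ fun i _ =>
        (db_cont2 (hb1 i) x).mul ((g1_smooth hu i x).continuous.comp continuous_snd)
    · exact continuous_finset_sum _ fun i _ => continuous_finset_sum _ fun j _ =>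
        (db_cont2 (hb2 i j) x).mul ((g2_smooth hu i j x).continuous.comp continuous_snd)
  have key := paramDeriv F F' hFsm hF'd hF'c t
  exact key

lemma memKer1_eq (hu0 : ∀ y, u y 0 = 0) (t : ℝ) :
    memTerm (ker1 b0) (fun i => ker1 (b1 i)) (fun i j => ker1 (b2 i j))
        (tder 1 u) x t
      = bdry b0 b1 b2 u x t + memTail b0 b1 b2 u x t := by
  classical
  -- integrability of all pieces
  have hk0c : Continuous (fun η => ker1 b0 x t η) := ker1_cont hb0 x t
  have hk1c : ∀ i, Continuous (fun η => ker1 (b1 i) x t η) :=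
    fun i => ker1_cont (hb1 i) x t
  have hk2c : ∀ i j, Continuous (fun η => ker1 (b2 i j) x t η) :=
    fun i j => ker1_cont (hb2 i j) x t
  have hc0 : Continuous (fun η => ker1 b0 x t η * tder 1 u x η) :=
    hk0c.mul (g0'_cont hu x)
  have hc1 : ∀ i, Continuous (fun η => ker1 (b1 i) x t η
      * pd i (fun y => tder 1 u y η) x) :=
    fun i => (hk1c i).mul (g1'_cont hu i x)
  have hc2 : ∀ i j, Continuous (fun η => ker1 (b2 i j) x t η
      * pd i (pd j (fun y => tder 1 u y η)) x) :=
    fun i j => (hk2c i j).mul (g2'_cont hu i j x)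
  -- split LHS
  have hL : memTerm (ker1 b0) (fun i => ker1 (b1 i)) (fun i j => ker1 (b2 i j))
        (tder 1 u) x t
      = (∫ η in (0:ℝ)..t, ker1 b0 x t η * tder 1 u x η)
        + (∑ i, ∫ η in (0:ℝ)..t, ker1 (b1 i) x t η * pd i (fun y => tder 1 u y η) x)
        + ∑ i, ∑ j, ∫ η in (0:ℝ)..t,
            ker1 (b2 i j) x t η * pd i (pd j (fun y => tder 1 u y η)) x := by
    rw [memTerm]
    rw [intervalIntegral.integral_add
      (((hc0).fun_add (continuous_finset_sum _ fun i _ => hc1 i)).intervalIntegrable 0 t)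
      ((continuous_finset_sum _ fun i _ =>
        continuous_finset_sum _ fun j _ => hc2 i j).intervalIntegrable 0 t)]
    rw [intervalIntegral.integral_add ((hc0).intervalIntegrable 0 t)
      ((continuous_finset_sum _ fun i _ => hc1 i).intervalIntegrable 0 t)]
    rw [intervalIntegral.integral_finset_sum
      (fun i _ => (hc1 i).intervalIntegrable 0 t)]
    rw [intervalIntegral.integral_finset_sum
      (fun i _ => (continuous_finset_sum _ fun j _ => hc2 i j).intervalIntegrable 0 t)]
    congr 1
    exact Finset.sum_congr rfl fun i _ => intervalIntegral.integral_finset_sum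
      (fun j _ => (hc2 i j).intervalIntegrable 0 t)
  -- per-term integration by parts
  have hg00 : (fun η => u x η) 0 = 0 := hu0 x
  have hg10 : ∀ i, pd i (fun y => u y 0) x = 0 := by
    intro i
    have e : (fun y => u y 0) = fun _ : Fin n → ℝ => (0:ℝ) := funext fun y => hu0 y
    rw [e, pd_const0 i]
  have I0 := ibp hb0 x t (fun η => u x η) (fun η => tder 1 u x η)
    (g0_hasDeriv hu x) (g0'_cont hu x) hg00
  have I1 : ∀ i : Fin n, ∫ η in (0:ℝ)..t,
        ker1 (b1 i) x t η * pd i (fun y => tder 1 u y η) x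
      = b1 i x t t * pd i (fun y => u y t) x
        + ∫ η in (0:ℝ)..t, deriv (fun s => b1 i x s η) t * pd i (fun y => u y η) x := by
    intro i
    exact ibp (hb1 i) x t (fun η => pd i (fun y => u y η) x)
      (fun η => pd i (fun y => tder 1 u y η) x)
      (g1_hasDeriv hu i x) (g1'_cont hu i x) (hg10 i)
  have I2 : ∀ i j : Fin n, ∫ η in (0:ℝ)..t,
        ker1 (b2 i j) x t η * pd i (pd j (fun y => tder 1 u y η)) x
      = b2 i j x t t * pd i (pd j (fun y => u y t)) x
        + ∫ η in (0:ℝ)..t,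
            deriv (fun s => b2 i j x s η) t * pd i (pd j (fun y => u y η)) x := by
    intro i j
    have hz : pd i (pd j (fun y => u y 0)) x = 0 := by
      have e : (fun y => u y 0) = fun _ : Fin n → ℝ => (0:ℝ) := funext fun y => hu0 y
      exact pd_pd_zero e i j x
    exact ibp (hb2 i j) x t (fun η => pd i (pd j (fun y => u y η)) x)
      (fun η => pd i (pd j (fun y => tder 1 u y η)) x)
      (g2_hasDeriv hu i j x) (g2'_cont hu i j x) hz
  -- split RHS tail
  have hd0c : Continuous (fun η => deriv (fun s => b0 x s η) t * u x η) :=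
    (db_cont hb0 x t).mul (g0_smooth hu x).continuous
  have hd1c : ∀ i, Continuous (fun η =>
      deriv (fun s => b1 i x s η) t * pd i (fun y => u y η) x) :=
    fun i => (db_cont (hb1 i) x t).mul (g1_smooth hu i x).continuous
  have hd2c : ∀ i j, Continuous (fun η =>
      deriv (fun s => b2 i j x s η) t * pd i (pd j (fun y => u y η)) x) :=
    fun i j => (db_cont (hb2 i j) x t).mul (g2_smooth hu i j x).continuous
  have hT : memTail b0 b1 b2 u x t
      = (∫ η in (0:ℝ)..t, deriv (fun s => b0 x s η) t * u x η)
        + (∑ i, ∫ η in (0:ℝ)..t,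
            deriv (fun s => b1 i x s η) t * pd i (fun y => u y η) x)
        + ∑ i, ∑ j, ∫ η in (0:ℝ)..t,
            deriv (fun s => b2 i j x s η) t * pd i (pd j (fun y => u y η)) x := by
    rw [memTail]
    rw [intervalIntegral.integral_add
      (((hd0c).fun_add (continuous_finset_sum _ fun i _ => hd1c i)).intervalIntegrable 0 t)
      ((continuous_finset_sum _ fun i _ =>
        continuous_finset_sum _ fun j _ => hd2c i j).intervalIntegrable 0 t)]
    rw [intervalIntegral.integral_add ((hd0c).intervalIntegrable 0 t)
      ((continuous_finset_sum _ fun i _ => hd1c i).intervalIntegrable 0 t)]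
    rw [intervalIntegral.integral_finset_sum
      (fun i _ => (hd1c i).intervalIntegrable 0 t)]
    rw [intervalIntegral.integral_finset_sum
      (fun i _ => (continuous_finset_sum _ fun j _ => hd2c i j).intervalIntegrable 0 t)]
    congr 1
    exact Finset.sum_congr rfl fun i _ => intervalIntegral.integral_finset_sum
      (fun j _ => (hd2c i j).intervalIntegrable 0 t)
  -- combine
  rw [hL, I0, hT, bdry]
  have e1 : (∑ i, ∫ η in (0:ℝ)..t,
        ker1 (b1 i) x t η * pd i (fun y => tder 1 u y η) x)
      = (∑ i, b1 i x t t * pd i (fun y => u y t) x)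
        + ∑ i, ∫ η in (0:ℝ)..t,
            deriv (fun s => b1 i x s η) t * pd i (fun y => u y η) x := by
    rw [← Finset.sum_add_distrib]
    exact Finset.sum_congr rfl fun i _ => I1 i
  have e2 : (∑ i, ∑ j, ∫ η in (0:ℝ)..t,
        ker1 (b2 i j) x t η * pd i (pd j (fun y => tder 1 u y η)) x)
      = (∑ i, ∑ j, b2 i j x t t * pd i (pd j (fun y => u y t)) x)
        + ∑ i, ∑ j, ∫ η in (0:ℝ)..t,
            deriv (fun s => b2 i j x s η) t * pd i (pd j (fun y => u y η)) x := by
    rw [← Finset.sum_add_distrib]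
    refine Finset.sum_congr rfl fun i _ => ?_
    rw [← Finset.sum_add_distrib]
    exact Finset.sum_congr rfl fun j _ => I2 i j
  rw [e1, e2]
  ring

end Mem
/-- The system (3.14) satisfied by u₁ = ∂ₜu. -/
theorem stmt3
    {n : ℕ} (hn : 1 ≤ n) (Ω : Set (Fin n → ℝ))
    (hΩo : IsOpen Ω) (hΩb : Bornology.IsBounded Ω)
    (aij : Fin n → Fin n → (Fin n → ℝ) → ℝ) (ha : CoeffOK aij)
    (T : ℝ) (hT : 0 < T)
    (b0 : (Fin n → ℝ) → ℝ → ℝ → ℝ)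
    (b1 : Fin n → (Fin n → ℝ) → ℝ → ℝ → ℝ)
    (b2 : Fin n → Fin n → (Fin n → ℝ) → ℝ → ℝ → ℝ)
    (hb0 : SmoothBdd3 b0) (hb1 : ∀ i, SmoothBdd3 (b1 i))
    (hb2 : ∀ i j, SmoothBdd3 (b2 i j))
    (R : (Fin n → ℝ) → ℝ → ℝ) (hR : SmoothBdd2 R)
    (f : (Fin n → ℝ) → ℝ) (hf : ContDiff ℝ (⊤ : ℕ∞) f)
    (hfs : ∀ x, x ∉ Ω → f x = 0)
    (u : (Fin n → ℝ) → ℝ → ℝ)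
    (hu : ContDiff ℝ (⊤ : ℕ∞) (fun p : (Fin n → ℝ) × ℝ => u p.1 p.2))
    (hus : ∀ x t, x ∉ Ω → u x t = 0)
    (hpde : ∀ x ∈ Ω, ∀ t ∈ Set.Ioo (0:ℝ) T,
      tder 2 u x t = opA aij (fun y => u y t) x + memTerm b0 b1 b2 u x t + R x t * f x)
    (hinit : ∀ x, u x 0 = 0 ∧ tder 1 u x 0 = 0) :
    (∀ x ∈ Ω, ∀ t ∈ Set.Ioo (0:ℝ) T,
      tder 2 (tder 1 u) x t
        = opA aij (fun y => tder 1 u y t) x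
          + memTerm (ker1 b0) (fun i => ker1 (b1 i)) (fun i j => ker1 (b2 i j))
              (tder 1 u) x t
          + deriv (fun s => R x s) t * f x) ∧
    (∀ x ∈ Ω, tder 1 u x 0 = 0 ∧ tder 1 (tder 1 u) x 0 = R x 0 * f x) := by

  classical
  obtain ⟨hsymm, haC1, hbd, hell⟩ := ha
  have hb0' := hb0.1
  have hb1' : ∀ i, ContDiff ℝ (⊤ : ℕ∞)
      (fun p : (Fin n → ℝ) × ℝ × ℝ => b1 i p.1 p.2.1 p.2.2) := fun i => (hb1 i).1
  have hb2' : ∀ i j, ContDiff ℝ (⊤ : ℕ∞)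
      (fun p : (Fin n → ℝ) × ℝ × ℝ => b2 i j p.1 p.2.1 p.2.2) := fun i j => (hb2 i j).1
  have hu0 : ∀ y, u y 0 = 0 := fun y => (hinit y).1
  have hRHS : ∀ (x : Fin n → ℝ) (t : ℝ), HasDerivAt
      (fun s => opA aij (fun y => u y s) x + memTerm b0 b1 b2 u x s + R x s * f x)
      (opA aij (fun y => tder 1 u y t) x
        + (bdry b0 b1 b2 u x t + memTail b0 b1 b2 u x t)
        + deriv (fun s => R x s) t * f x) t := by
    intro x t
    have h1 : HasDerivAt (fun s => opA aij (fun y => u y s) x)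
        (opA aij (fun y => tder 1 u y t) x) t := opA_hasDerivAt aij haC1 hu x t
    have h2 := memTerm_hasDerivAt hb0' hb1' hb2' hu x t
    have h3 : HasDerivAt (fun s => R x s * f x) (deriv (fun s => R x s) t * f x) t := by
      have hRsm : ContDiff ℝ (⊤ : ℕ∞) (fun s => R x s) :=
        hR.1.comp (contDiff_const.prodMk contDiff_id)
      exact ((hRsm.differentiable (by simp) t).hasDerivAt).mul_const _
    exact (h1.add h2).add h3
  have hopA0 : ∀ x, opA aij (fun y => u y 0) x = 0 := by
    intro x
    have key : ∀ i j : Fin n, pd i (fun y => aij i j y * pd j (fun z => u z 0) y) x = 0 := by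
      intro i j
      have e1 : (fun y => aij i j y * pd j (fun z => u z 0) y)
          = fun _ : Fin n → ℝ => (0:ℝ) := by
        funext y
        rw [show (fun z => u z 0) = (fun _ : Fin n → ℝ => (0:ℝ)) from
          funext fun z => hu0 z, pd_const0 j]
        simp
      rw [e1]
      simp [pd]
    simp [opA, key]
  constructor
  · intro x hx t ht
    have hev : (fun s => tder 2 u x s) =ᶠ[nhds t]
        (fun s => opA aij (fun y => u y s) x + memTerm b0 b1 b2 u x s + R x s * f x) := by
      filter_upwards [Ioo_mem_nhds ht.1 ht.2] with s hs
      exact hpde x hx s hs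
    have hdeq := hev.deriv_eq
    have hd := (hRHS x t).deriv
    have hmem := memKer1_eq hb0' hb1' hb2' hu x hu0 t
    calc tder 2 (tder 1 u) x t
        = deriv (fun s => tder 2 u x s) t := rfl
      _ = deriv (fun s => opA aij (fun y => u y s) x
            + memTerm b0 b1 b2 u x s + R x s * f x) t := hdeq
      _ = opA aij (fun y => tder 1 u y t) x
            + (bdry b0 b1 b2 u x t + memTail b0 b1 b2 u x t)
            + deriv (fun s => R x s) t * f x := hd
      _ = opA aij (fun y => tder 1 u y t) x
            + memTerm (ker1 b0) (fun i => ker1 (b1 i)) (fun i j => ker1 (b2 i j))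
                (tder 1 u) x t
            + deriv (fun s => R x s) t * f x := by rw [← hmem]
  · intro x hx
    refine ⟨(hinit x).2, ?_⟩
    have hcR : ContinuousAt (fun s => opA aij (fun y => u y s) x
        + memTerm b0 b1 b2 u x s + R x s * f x) 0 := (hRHS x 0).continuousAt
    have hcL : Continuous (fun s => tder 2 u x s) :=
      ((g0_smooth hu x).iterate_deriv 2).continuous
    have hmemIoo : Set.Ioo (0:ℝ) T ∈ nhdsWithin (0:ℝ) (Set.Ioi 0) :=
      Ioo_mem_nhdsGT_of_mem ⟨le_refl 0, hT⟩
    have h1 : Filter.Tendsto (fun s => tder 2 u x s) (nhdsWithin (0:ℝ) (Set.Ioi 0))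
        (nhds (tder 2 u x 0)) := (hcL.tendsto 0).mono_left nhdsWithin_le_nhds
    have h2 : Filter.Tendsto (fun s => tder 2 u x s) (nhdsWithin (0:ℝ) (Set.Ioi 0))
        (nhds (opA aij (fun y => u y 0) x + memTerm b0 b1 b2 u x 0 + R x 0 * f x)) := by
      refine Filter.Tendsto.congr' ?_ (hcR.mono_left nhdsWithin_le_nhds)
      filter_upwards [hmemIoo] with s hs
      exact (hpde x hx s hs).symm
    have huniq := tendsto_nhds_unique h1 h2
    have hmem0 : memTerm b0 b1 b2 u x 0 = 0 := by
      simp [memTerm]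
    calc tder 1 (tder 1 u) x 0 = tder 2 u x 0 := rfl
      _ = opA aij (fun y => u y 0) x + memTerm b0 b1 b2 u x 0 + R x 0 * f x := huniq
      _ = R x 0 * f x := by rw [hopA0 x, hmem0]; ring
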